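/- arXiv:math/0503695 — 5 statements merged into one kernel-verified Lean document; each statement's English description precedes it below -/
import Mathlib

section
/- Let 1 ≤ k < m and let λ ∈ ℝ^m satisfy S_j(λ) ≥ 0 for all j = 1,…,k. Then for every i = 1,…,m one has −λ_i ≤ [ (m−k) / ( k(m−1) ) ] · S_{1,i}(λ), i.e. the smallest value −λ_i can take is controlled by the sum of the remaining entries. -/
open MeasureTheory Filter Topology

noncomputable section

/-- Action of a first-order vector field with coefficient vector `c` on a function `u`:
`(Xu)(x) = ∑ j c(x)_j D_j u(x) = Du(x)·c(x)`. -/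
def Xop {n : ℕ} (c : (Fin n → ℝ) → (Fin n → ℝ)) (u : (Fin n → ℝ) → ℝ)
    (x : Fin n → ℝ) : ℝ :=
  fderiv ℝ u x (c x)

/-- Lie bracket of the coefficient vector fields `c`, `d`. -/
def vfBracket {n : ℕ} (c d : (Fin n → ℝ) → (Fin n → ℝ)) (x : Fin n → ℝ) :
    Fin n → ℝ :=
  fun l => fderiv ℝ (fun y => d y l) x (c x) - fderiv ℝ (fun y => c y l) x (d x)

/-- The sub-Laplacian `Δ_X u = ∑ i X_i X_i u`. -/
def subLap {n m : ℕ} (b : Fin m → (Fin n → ℝ) → (Fin n → ℝ))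
    (u : (Fin n → ℝ) → ℝ) (x : Fin n → ℝ) : ℝ :=
  ∑ i, Xop (b i) (Xop (b i) u) x

/-- The commutator `[X_i, X_j] u = X_i X_j u - X_j X_i u`. -/
def commOp {n m : ℕ} (b : Fin m → (Fin n → ℝ) → (Fin n → ℝ)) (i j : Fin m)
    (u : (Fin n → ℝ) → ℝ) (x : Fin n → ℝ) : ℝ :=
  Xop (b i) (Xop (b j) u) x - Xop (b j) (Xop (b i) u) x

/-- The symmetric Hessian `X_s² u = [½ (X_i X_j + X_j X_i) u]`. -/
def symmHess {n m : ℕ} (b : Fin m → (Fin n → ℝ) → (Fin n → ℝ))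
    (u : (Fin n → ℝ) → ℝ) (x : Fin n → ℝ) : Matrix (Fin m) (Fin m) ℝ :=
  fun i j => (Xop (b i) (Xop (b j) u) x + Xop (b j) (Xop (b i) u) x) / 2

theorem symmHess_isHermitian {n m : ℕ} (b : Fin m → (Fin n → ℝ) → (Fin n → ℝ))
    (u : (Fin n → ℝ) → ℝ) (x : Fin n → ℝ) : (symmHess b u x).IsHermitian := by
  unfold Matrix.IsHermitian
  ext i j
  simp only [Matrix.conjTranspose_apply, symmHess, star_trivial]
  ring

/-- Eigenvalues of the symmetric Hessian. -/
def hessEig {n m : ℕ} (b : Fin m → (Fin n → ℝ) → (Fin n → ℝ))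
    (u : (Fin n → ℝ) → ℝ) (x : Fin n → ℝ) : Fin m → ℝ :=
  (symmHess_isHermitian b u x).eigenvalues

/-- `k`-th elementary symmetric function of `m` real numbers. -/
def esymmF {m : ℕ} (k : ℕ) (lam : Fin m → ℝ) : ℝ :=
  ∑ s ∈ Finset.powersetCard k (Finset.univ : Finset (Fin m)), ∏ i ∈ s, lam i

/-- `S_{j,i}(λ)`: the `j`-th elementary symmetric function with the variable `λ_i` set to `0`. -/
def esymmDrop {m : ℕ} (j : ℕ) (i : Fin m) (lam : Fin m → ℝ) : ℝ :=
  ∑ s ∈ Finset.powersetCard j ((Finset.univ : Finset (Fin m)).erase i), ∏ l ∈ s, lam l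

/-- `u` is `k`-convex with respect to the vector fields `b` on `Ω`:
`S_j(λ(X_s²u)) ≥ 0` on `Ω` for `j = 1, …, k`. -/
def IsKConvex {n m : ℕ} (Ω : Set (Fin n → ℝ)) (b : Fin m → (Fin n → ℝ) → (Fin n → ℝ))
    (k : ℕ) (u : (Fin n → ℝ) → ℝ) : Prop :=
  ∀ x ∈ Ω, ∀ j, 1 ≤ j → j ≤ k → 0 ≤ esymmF j (hessEig b u x)

/-- `F_2[u] = S_2(λ(X_s²u))`. -/
def F2fun {n m : ℕ} (b : Fin m → (Fin n → ℝ) → (Fin n → ℝ))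
    (u : (Fin n → ℝ) → ℝ) (x : Fin n → ℝ) : ℝ :=
  esymmF 2 (hessEig b u x)

/-- `𝓔_2[u] = ∑_{i<j} ([X_i,X_j]u)²`. -/
def E2fun {n m : ℕ} (b : Fin m → (Fin n → ℝ) → (Fin n → ℝ))
    (u : (Fin n → ℝ) → ℝ) (x : Fin n → ℝ) : ℝ :=
  ∑ i : Fin m, ∑ j ∈ Finset.Ioi i, (commOp b i j u x) ^ 2

/-- `𝓕_2[u] = F_2[u] + (3/4) 𝓔_2[u]`. -/
def calF2 {n m : ℕ} (b : Fin m → (Fin n → ℝ) → (Fin n → ℝ))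
    (u : (Fin n → ℝ) → ℝ) (x : Fin n → ℝ) : ℝ :=
  F2fun b u x + (3 / 4) * E2fun b u x

/-- `|Xu|(x)`, the length of the subelliptic gradient. -/
def XgradNorm {n m : ℕ} (b : Fin m → (Fin n → ℝ) → (Fin n → ℝ))
    (u : (Fin n → ℝ) → ℝ) (x : Fin n → ℝ) : ℝ :=
  Real.sqrt (∑ i, (Xop (b i) u x) ^ 2)

/-- Condition (i): each `X_i` is divergence free, i.e. anti-self-adjoint. -/
def DivFree {n m : ℕ} (Ω : Set (Fin n → ℝ))
    (b : Fin m → (Fin n → ℝ) → (Fin n → ℝ)) : Prop :=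
  ∀ i : Fin m, ∀ x ∈ Ω, ∑ j, fderiv ℝ (fun y => b i y j) x (Pi.single j 1) = 0

/-- The set of iterated Lie brackets generated by the fields `b`. -/
inductive LieGen {n m : ℕ} (b : Fin m → (Fin n → ℝ) → (Fin n → ℝ)) :
    ((Fin n → ℝ) → (Fin n → ℝ)) → Prop
  | base (i : Fin m) : LieGen b (b i)
  | bracket {c d : (Fin n → ℝ) → (Fin n → ℝ)} :
      LieGen b c → LieGen b d → LieGen b (fun x => vfBracket c d x)

/-- Condition (ii): the Hörmander condition; iterated commutators span `ℝⁿ` at each point. -/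
def Hormander {n m : ℕ} (Ω : Set (Fin n → ℝ))
    (b : Fin m → (Fin n → ℝ) → (Fin n → ℝ)) : Prop :=
  ∀ x ∈ Ω, Submodule.span ℝ {v : Fin n → ℝ | ∃ c, LieGen b c ∧ c x = v} = ⊤

/-- Condition (iii): all second commutators `[X_i,[X_i,X_j]]` vanish. -/
def SecondCommVanish {n m : ℕ} (Ω : Set (Fin n → ℝ))
    (b : Fin m → (Fin n → ℝ) → (Fin n → ℝ)) : Prop :=
  ∀ i j : Fin m, ∀ x ∈ Ω, vfBracket (b i) (fun y => vfBracket (b i) (b j) y) x = 0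

/-- `Ω' ⊂⊂ Ω`: `Ω'` is open and compactly contained in `Ω`. -/
def CptIn {n : ℕ} (Ω' Ω : Set (Fin n → ℝ)) : Prop :=
  IsOpen Ω' ∧ IsCompact (closure Ω') ∧ closure Ω' ⊆ Ω

/-- A sub-unitary (piecewise C¹) curve on `[0,T]` with respect to the fields `b`. -/
def IsSubunitary {n m : ℕ} (b : Fin m → (Fin n → ℝ) → (Fin n → ℝ)) (T : ℝ)
    (γ : ℝ → Fin n → ℝ) : Prop :=
  ContinuousOn γ (Set.Icc 0 T) ∧
  ∃ S : Finset ℝ, ∀ t ∈ Set.Ioo 0 T, t ∉ S →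
    ∃ γ' : Fin n → ℝ, HasDerivAt γ γ' t ∧
      ∀ ξ : Fin n → ℝ, (∑ j, γ' j * ξ j) ^ 2 ≤ ∑ i, (∑ j, b i (γ t) j * ξ j) ^ 2

/-- The Carnot–Carathéodory distance associated with the fields `b`. -/
def ccDist {n m : ℕ} (b : Fin m → (Fin n → ℝ) → (Fin n → ℝ))
    (x y : Fin n → ℝ) : ℝ :=
  sInf {T : ℝ | 0 < T ∧ ∃ γ : ℝ → Fin n → ℝ,
    IsSubunitary b T γ ∧ γ 0 = x ∧ γ T = y}

/-- The C-C ball of radius `R` about `x`. -/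
def ccBall {n m : ℕ} (b : Fin m → (Fin n → ℝ) → (Fin n → ℝ))
    (x : Fin n → ℝ) (R : ℝ) : Set (Fin n → ℝ) :=
  {y | ccDist b x y < R}

/-- The doubling property `|B_{tR}(x)| ≥ C t^Q |B_R(x)|`. -/
def DoublingDim {n m : ℕ} (Ω : Set (Fin n → ℝ))
    (b : Fin m → (Fin n → ℝ) → (Fin n → ℝ)) (Q : ℕ) : Prop :=
  ∃ C > (0 : ℝ), ∃ R0 > (0 : ℝ), ∀ x ∈ Ω, ∀ t ∈ Set.Ioo (0 : ℝ) 1,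
    ∀ R : ℝ, 0 < R → R < R0 →
      C * t ^ Q * (volume (ccBall b x R)).toReal ≤ (volume (ccBall b x (t * R))).toReal

/-- `Q` is the homogeneous dimension of the system `b` in `Ω`. -/
def IsHomDim {n m : ℕ} (Ω : Set (Fin n → ℝ))
    (b : Fin m → (Fin n → ℝ) → (Fin n → ℝ)) (Q : ℕ) : Prop :=
  0 < Q ∧ DoublingDim Ω b Q ∧ ∀ Q' : ℕ, 0 < Q' → DoublingDim Ω b Q' → Q ≤ Q'

/-- The class `φ^k(Ω)` of `L¹_loc(Ω)` limits of smooth `k`-convex functions. -/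
def PhiK {n m : ℕ} (Ω : Set (Fin n → ℝ)) (b : Fin m → (Fin n → ℝ) → (Fin n → ℝ))
    (k : ℕ) (u : (Fin n → ℝ) → ℝ) : Prop :=
  LocallyIntegrableOn u Ω ∧
  ∀ Ω' : Set (Fin n → ℝ), CptIn Ω' Ω →
    ∃ us : ℕ → (Fin n → ℝ) → ℝ,
      (∀ l, ContDiffOn ℝ 2 (us l) Ω' ∧ IsKConvex Ω' b k (us l)) ∧
      ∀ K : Set (Fin n → ℝ), K ⊆ Ω' → IsCompact K →
        Tendsto (fun l => ∫ x in K, |us l x - u x|) atTop (𝓝 0)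

end

/-!
Write `λ = (λ_i, t)` with `t` the remaining `n = m - 1` entries, so that
`S_j(λ) = e_j(t) + λ_i e_{j-1}(t)`. If `λ_i ≥ 0`, the bound follows from `S_1(λ) ≥ 0` alone.
If `λ_i < 0`, the hypotheses force `e_1(t), …, e_k(t) > 0` and `-λ_i e_{k-1}(t) ≤ e_k(t)`, and
Newton's inequalities `(j+2)(n-j) e_j e_{j+2} ≤ (j+1)(n-j-1) e_{j+1}²` chain to
`k n e_k(t) ≤ (n-k+1) e_1(t) e_{k-1}(t)`. Newton's inequalities go by induction on `n`:
differentiating `∏ (X - t_l)` keeps all roots real (Rolle) and preserves the normalised functions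
`e_j / C(n, j)`, which reduces them to the case `n = j + 2`, itself an induction on the number
of variables with an explicit sum-of-squares certificate.
-/

namespace Multiset

variable {R : Type*} [CommSemiring R]

theorem esymm_zero (s : Multiset R) : s.esymm 0 = 1 := by
  simp [esymm]

theorem esymm_eq_zero_of_card_lt {s : Multiset R} {k : ℕ} (h : card s < k) : s.esymm k = 0 := by
  simp [esymm, powersetCard_eq_empty _ h]

theorem esymm_cons_succ (a : R) (s : Multiset R) (k : ℕ) :
    (a ::ₘ s).esymm (k + 1) = s.esymm (k + 1) + a * s.esymm k := by
  simp [esymm, powersetCard_cons, sum_map_mul_left]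

theorem two_mul_esymm_mul_esymm_le_of_card_eq (s : Multiset ℝ) {j : ℕ} (hs : card s = j + 2) :
    2 * (j + 2) * (s.esymm j * s.esymm (j + 2)) ≤ (j + 1) * s.esymm (j + 1) ^ 2 := by
  induction j generalizing s with
  | zero =>
    obtain ⟨x, y, rfl⟩ := card_eq_two.mp hs
    simp only [insert_eq_cons, zero_add, esymm_pair_one, esymm_pair_two, esymm_zero]
    push_cast
    nlinarith [sq_nonneg (x - y)]
  | succ j ih =>
    obtain ⟨a, ha⟩ := card_pos_iff_exists_mem.mp (show 0 < card s by omega)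
    obtain ⟨t, rfl⟩ := exists_cons_of_mem ha
    have ht : card t = j + 2 := by rw [card_cons] at hs; omega
    have hgap := ih t ht
    have htop : t.esymm (j + 3) = 0 := esymm_eq_zero_of_card_lt (by omega)
    rw [show j + 1 + 2 = j + 2 + 1 by ring, esymm_cons_succ, esymm_cons_succ, esymm_cons_succ, htop]
    push_cast
    refine le_of_mul_le_mul_left ?_ (by positivity : (0 : ℝ) < j + 2)
    linear_combination sq_nonneg ((j + 2) * t.esymm (j + 2) - a * t.esymm (j + 1)) +
      ((j + 3) * a ^ 2) * hgap

end Multiset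

namespace Polynomial

theorem card_roots_derivative {p : ℝ[X]} (hp : Multiset.card p.roots = p.natDegree) :
    Multiset.card (derivative p).roots = (derivative p).natDegree := by
  refine le_antisymm (card_roots' _) ?_
  have := card_roots_le_derivative p
  rw [natDegree_derivative]
  omega

theorem esymm_roots_derivative {p : ℝ[X]} {n : ℕ} (hn : p.natDegree = n + 1)
    (hp : Multiset.card p.roots = p.natDegree) {r : ℕ} (hr : r ≤ n) :
    (n + 1 : ℝ) * (derivative p).roots.esymm r = (n + 1 - r : ℝ) * p.roots.esymm r := by
  have hdeg : (derivative p).natDegree = n := by simp [hn]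
  have hlc : p.leadingCoeff ≠ 0 := leadingCoeff_ne_zero.2 (by rintro rfl; simp at hn)
  have hlc' : (derivative p).leadingCoeff = p.leadingCoeff * (n + 1) := by
    rw [leadingCoeff, hdeg, coeff_derivative, leadingCoeff, hn]
  have h' := coeff_eq_esymm_roots_of_card (card_roots_derivative hp) (k := n - r) (by omega)
  have h := coeff_eq_esymm_roots_of_card hp (k := n - r + 1) (by omega)
  rw [hdeg, show n - (n - r) = r by omega, hlc'] at h'
  rw [hn, show n + 1 - (n - r + 1) = r by omega] at h
  have hcoeff := coeff_derivative p (n - r)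
  rw [h', h, Nat.cast_sub hr] at hcoeff
  refine mul_left_cancel₀ (mul_ne_zero hlc (pow_ne_zero r (neg_ne_zero.2 one_ne_zero))) ?_
  linear_combination hcoeff

end Polynomial

namespace Multiset

open Polynomial in
theorem exists_card_eq_esymm_eq_of_card_eq_succ (s : Multiset ℝ) {n : ℕ} (hs : card s = n + 1) :
    ∃ ρ : Multiset ℝ, card ρ = n ∧
      ∀ r ≤ n, (n + 1 : ℝ) * ρ.esymm r = (n + 1 - r : ℝ) * s.esymm r := by
  set q : ℝ[X] := (s.map fun a => X - C a).prod
  have hroots : q.roots = s := roots_multiset_prod_X_sub_C s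
  have hdeg : q.natDegree = card s := natDegree_multiset_prod_X_sub_C_eq_card s
  have hcard : card q.roots = q.natDegree := by rw [hroots, hdeg]
  refine ⟨(derivative q).roots, ?_, fun r hr => ?_⟩
  · rw [card_roots_derivative hcard, natDegree_derivative, hdeg, hs, Nat.add_sub_cancel]
  · rw [← hroots]
    exact esymm_roots_derivative (hdeg.trans hs) hcard hr

theorem newton_esymm (s : Multiset ℝ) {j : ℕ} (hj : j + 2 ≤ card s) :
    (j + 2) * (card s - j) * (s.esymm j * s.esymm (j + 2)) ≤
      (j + 1) * (card s - j - 1) * s.esymm (j + 1) ^ 2 := by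
  generalize hn : card s = n at hj ⊢
  induction n, hj using Nat.le_induction generalizing s with
  | base =>
    have := two_mul_esymm_mul_esymm_le_of_card_eq s hn
    push_cast
    linear_combination this
  | succ n hjn ih =>
    obtain ⟨ρ, hρ, hesymm⟩ := exists_card_eq_esymm_eq_of_card_eq_succ s hn
    have hscaled := mul_le_mul_of_nonneg_left (ih ρ hρ) (sq_nonneg ((n : ℝ) + 1))
    have h0 := hesymm j (by omega)
    have h1 := hesymm (j + 1) (by omega)
    have h2 := hesymm (j + 2) (by omega)
    have hpos : (0 : ℝ) < (n - j) * (n - j - 1) := by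
      have : (j : ℝ) + 2 ≤ n := by exact_mod_cast hjn
      nlinarith
    refine le_of_mul_le_mul_left ?_ hpos
    push_cast at h1 h2 ⊢
    linear_combination hscaled - (j + 2) * (n - j) * ((n + 1) * ρ.esymm (j + 2) * h0
      + (n + 1 - j) * s.esymm j * h2) + (j + 1) * (n - j - 1) * ((n + 1) * ρ.esymm (j + 1)
      + (n - j) * s.esymm (j + 1)) * h1

theorem mul_esymm_succ_le (s : Multiset ℝ) {p : ℕ} (hp : p < card s)
    (hpos : ∀ j ≤ p, 0 < s.esymm j) :
    (p + 1) * card s * s.esymm (p + 1) ≤ (card s - p) * s.esymm 1 * s.esymm p := by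
  induction p with
  | zero => simp [esymm_zero]
  | succ p ih =>
    have ih := ih (by omega) fun j hj => hpos j (by omega)
    have hnewton := newton_esymm s (j := p) (by omega)
    have hp0 := hpos p (by omega)
    have hp1 := hpos (p + 1) le_rfl
    have hp' : (p : ℝ) + 1 < card s := by exact_mod_cast hp
    have ih' := mul_le_mul_of_nonneg_left ih
      (mul_nonneg (by linarith : (0 : ℝ) ≤ card s - p - 1) hp1.le)
    refine le_of_mul_le_mul_left ?_ (mul_pos (by linarith : (0 : ℝ) < card s - p) hp0)
    push_cast
    linear_combination (card s : ℝ) * hnewton + ih'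

theorem esymm_pos_of_esymm_cons_nonneg {a : ℝ} (ha : a < 0) (t : Multiset ℝ) {k : ℕ}
    (h : ∀ j, 1 ≤ j → j ≤ k → 0 ≤ (a ::ₘ t).esymm j) : ∀ j ≤ k, 0 < t.esymm j := by
  intro j hj
  induction j with
  | zero => simp [esymm_zero]
  | succ j ih =>
    have hcons := h (j + 1) (by omega) hj
    rw [esymm_cons_succ] at hcons
    linarith [mul_neg_of_neg_of_pos ha (ih (by omega))]

theorem neg_mul_le_esymm_one_of_esymm_cons_nonneg (a : ℝ) (t : Multiset ℝ) {k : ℕ}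
    (hk : 1 ≤ k) (hkt : k ≤ card t) (h : ∀ j, 1 ≤ j → j ≤ k → 0 ≤ (a ::ₘ t).esymm j) :
    -a * (k * card t) ≤ (card t + 1 - k) * t.esymm 1 := by
  have hk' : (1 : ℝ) ≤ k := by exact_mod_cast hk
  have hkt' : (k : ℝ) ≤ card t := by exact_mod_cast hkt
  rcases le_or_gt 0 a with ha | ha
  · have h1 := h 1 le_rfl hk
    rw [esymm_cons_succ, esymm_zero] at h1
    have hcoef : (0 : ℝ) ≤ k * card t - (card t + 1 - k) := by nlinarith
    linear_combination mul_nonneg hcoef ha + mul_nonneg (by linarith : (0 : ℝ) ≤ card t + 1 - k) h1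
  · obtain ⟨p, rfl⟩ : ∃ p, k = p + 1 := ⟨k - 1, by omega⟩
    have hpos := esymm_pos_of_esymm_cons_nonneg ha t h
    have hmac := mul_esymm_succ_le t (p := p) (by omega) fun j hj => hpos j (by omega)
    have hcons := h (p + 1) (by omega) le_rfl
    rw [esymm_cons_succ] at hcons
    refine le_of_mul_le_mul_right ?_ (hpos p (by omega))
    push_cast at hmac ⊢
    linear_combination hmac + ((p + 1) * card t : ℝ) * hcons

end Multiset

/-- estimate (3.7) with MacLaurin's inequality. If `S_j(λ) ≥ 0`
for `j = 1, …, k` and `1 ≤ k < m`, then `-λ_i ≤ (m-k)/(k(m-1)) · S_{1,i}(λ)`. -/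
theorem neg_eig_le_maclaurin (m k : ℕ) (hk1 : 1 ≤ k) (hkm : k < m)
    (lam : Fin m → ℝ) (hpos : ∀ j, 1 ≤ j → j ≤ k → 0 ≤ esymmF j lam) :
    ∀ i : Fin m, -lam i ≤
      (((m : ℝ) - (k : ℝ)) / ((k : ℝ) * ((m : ℝ) - 1))) * esymmDrop 1 i lam := by
  intro i
  set t : Multiset ℝ := (Finset.univ.erase i).val.map lam
  have hcard : Multiset.card t = m - 1 := by simp [t]
  have hdrop : esymmDrop 1 i lam = t.esymm 1 := (Finset.esymm_map_val lam _ 1).symm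
  have hfull : ∀ j, esymmF j lam = (lam i ::ₘ t).esymm j := fun j => by
    rw [← Multiset.map_cons, Finset.erase_val,
      Multiset.cons_erase (Finset.mem_univ i), Finset.esymm_map_val]
    rfl
  have hmain := Multiset.neg_mul_le_esymm_one_of_esymm_cons_nonneg (lam i) t hk1 (by omega)
    fun j hj1 hjk => hfull j ▸ hpos j hj1 hjk
  have hm : ((m - 1 : ℕ) : ℝ) = m - 1 := by rw [Nat.cast_sub (by omega), Nat.cast_one]
  rw [hcard, hm] at hmain
  have hk : (1 : ℝ) ≤ k := by exact_mod_cast hk1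
  have hkm' : (k : ℝ) + 1 ≤ m := by exact_mod_cast hkm
  rw [hdrop, div_mul_eq_mul_div, le_div_iff₀ (mul_pos (by linarith) (by linarith))]
  linarith
end

section
/- Let 1 ≤ k ≤ m and let λ ∈ ℝ^m satisfy S_j(λ) ≥ 0 for all j = 1,…,k. Then S_{j,i}(λ) ≥ 0 for all j = 1,…,k−1 and all i = 1,…,m. -/
open MeasureTheory Filter Topology

section AuxNewton
open Polynomial

lemma rr_derivative {p : ℝ[X]} (h : Multiset.card p.roots = p.natDegree) :
    Multiset.card (derivative p).roots = (derivative p).natDegree ∧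
      (derivative p).natDegree = p.natDegree - 1 := by
  rcases Nat.eq_zero_or_pos p.natDegree with h0 | h0
  · have hp : p = C (p.coeff 0) := eq_C_of_natDegree_eq_zero h0
    rw [hp, derivative_C]
    simp [h0]
  · have h1 := natDegree_derivative_le p
    have h2 := p.card_roots_le_derivative
    have h3 := (derivative p).card_roots'
    omega

lemma rr_iterate {p : ℝ[X]} (h : Multiset.card p.roots = p.natDegree) (k : ℕ) :
    Multiset.card (derivative^[k] p).roots = (derivative^[k] p).natDegree ∧
      (derivative^[k] p).natDegree = p.natDegree - k := by
  induction k with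
  | zero => simpa using h
  | succ k ih =>
    rw [Function.iterate_succ_apply']
    obtain ⟨ih1, ih2⟩ := ih
    obtain ⟨a1, a2⟩ := rr_derivative ih1
    exact ⟨a1, by omega⟩

lemma reverse_multiset_prod (M : Multiset ℝ[X]) : M.prod.reverse = (M.map reverse).prod := by
  induction M using Multiset.induction_on with
  | empty =>
    show reverse 1 = 1
    rw [← C_1, reverse_C]
  | cons a M ih => simp [reverse_mul_of_domain, ih]

lemma reverse_X_sub_C' (a : ℝ) : (X - C a).reverse = 1 - C a * X := by
  rw [reverse, natDegree_X_sub_C]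
  have h1 : (X : ℝ[X]) = X ^ 1 := (pow_one _).symm
  rw [reflect_sub, reflect_C, h1, reflect_monomial]
  norm_num

lemma rr_reverse {p : ℝ[X]} (h : Multiset.card p.roots = p.natDegree) (h0 : p.coeff 0 ≠ 0) :
    Multiset.card p.reverse.roots = p.reverse.natDegree ∧
      p.reverse.natDegree = p.natDegree := by
  have hp0 : p ≠ 0 := fun hp => h0 (by simp [hp])
  have htr : p.natTrailingDegree = 0 := by
    rw [natTrailingDegree_eq_zero]; exact Or.inr h0
  have hdeg : p.reverse.natDegree = p.natDegree := by
    rw [reverse_natDegree, htr, Nat.sub_zero]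
  refine ⟨?_, hdeg⟩
  have hroots0 : ∀ a ∈ p.roots, a ≠ 0 := by
    intro a ha ha0
    have := (mem_roots hp0).mp ha
    rw [ha0] at this
    exact h0 (by rw [coeff_zero_eq_eval_zero]; exact this)
  have hfac := C_leadingCoeff_mul_prod_multiset_X_sub_C h
  have hrev : p.reverse = C p.leadingCoeff *
      (p.roots.map fun a => (1 : ℝ[X]) - C a * X).prod := by
    conv_lhs => rw [← hfac]
    rw [reverse_mul_of_domain, reverse_C, reverse_multiset_prod, Multiset.map_map]
    congr 1
    refine congrArg (fun M : Multiset ℝ[X] => M.prod) (Multiset.map_congr rfl fun a _ => ?_)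
    simp only [Function.comp_apply]
    exact reverse_X_sub_C' a
  have hfac2 : (p.roots.map fun a => (1 : ℝ[X]) - C a * X).prod =
      C ((p.roots.map fun a => -a).prod) * ((p.roots.map fun a => a⁻¹).map fun a => X - C a).prod := by
    have e1 : (p.roots.map fun a => (1 : ℝ[X]) - C a * X) =
        p.roots.map (fun a => C (-a) * (X - C a⁻¹)) := by
      refine Multiset.map_congr rfl fun a ha => ?_
      have ha0 := hroots0 a ha
      have hinv : (-a) * a⁻¹ = -1 := by field_simp
      rw [mul_sub, ← C_mul, hinv]
      simp only [map_neg, map_one, neg_mul, sub_neg_eq_add]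
      ring
    rw [e1, Multiset.prod_map_mul, Multiset.map_map]
    congr 1
    · rw [map_multiset_prod (C : ℝ →+* ℝ[X]), Multiset.map_map]
      rfl
  have hC : ((p.roots.map fun a => -a).prod : ℝ) ≠ 0 := by
    apply Multiset.prod_ne_zero
    simp only [Multiset.mem_map]
    rintro ⟨a, ha, ha2⟩
    exact hroots0 a ha (by linarith [neg_eq_zero.mp ha2])
  have hlc : p.leadingCoeff ≠ 0 := leadingCoeff_ne_zero.mpr hp0
  rw [hrev, hfac2, ← mul_assoc, ← C_mul, roots_C_mul _ (mul_ne_zero hlc hC),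
    roots_multiset_prod_X_sub_C, natDegree_C_mul (mul_ne_zero hlc hC),
    natDegree_multiset_prod_X_sub_C_eq_card]

section Newton

variable {ι : Type*}

lemma coeff_prodXC (s : Finset ι) (lam : ι → ℝ) {j : ℕ} (hj : j ≤ s.card) :
    (∏ i ∈ s, (X + C (lam i))).coeff (s.card - j) =
      ∑ t ∈ s.powersetCard j, ∏ l ∈ t, lam l := by
  rw [Finset.prod_X_add_C_coeff s lam (Nat.sub_le _ _), Nat.sub_sub_self hj]

lemma base_facts (s : Finset ι) (lam : ι → ℝ) :
    Multiset.card (∏ i ∈ s, (X + C (lam i))).roots = (∏ i ∈ s, (X + C (lam i))).natDegree ∧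
    (∏ i ∈ s, (X + C (lam i))).natDegree = s.card := by
  have hf : (∏ i ∈ s, (X + C (lam i))) =
      ((s.1.map fun i => -lam i).map fun a => X - C a).prod := by
    rw [Multiset.map_map, Finset.prod_eq_multiset_prod]
    refine congrArg (fun M : Multiset ℝ[X] => M.prod) (Multiset.map_congr rfl fun i _ => ?_)
    simp [sub_neg_eq_add]
  constructor
  · rw [hf, roots_multiset_prod_X_sub_C, natDegree_multiset_prod_X_sub_C_eq_card]
  · rw [hf, natDegree_multiset_prod_X_sub_C_eq_card, Multiset.card_map]; rfl

lemma newton_zero (s : Finset ι) (lam : ι → ℝ) (r : ℕ) (hr : 1 ≤ r) (hrN : r + 1 ≤ s.card)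
    (hz : ∑ t ∈ s.powersetCard r, ∏ l ∈ t, lam l = 0) :
    (∑ t ∈ s.powersetCard (r - 1), ∏ l ∈ t, lam l) *
      (∑ t ∈ s.powersetCard (r + 1), ∏ l ∈ t, lam l) ≤ 0 := by
  set N := s.card with hN
  set A := ∑ t ∈ s.powersetCard (r - 1), ∏ l ∈ t, lam l with hA
  set B := ∑ t ∈ s.powersetCard (r + 1), ∏ l ∈ t, lam l with hB
  by_cases hE : B = 0
  · rw [hE, mul_zero]
  set f : ℝ[X] := ∏ i ∈ s, (X + C (lam i)) with hfdef
  obtain ⟨hfr, hfd⟩ := base_facts s lam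
  set h : ℝ[X] := derivative^[N - r - 1] f with hh
  obtain ⟨hhr, hhd⟩ := rr_iterate hfr (N - r - 1)
  rw [hfd] at hhd
  rw [← hfdef, ← hh] at hhr hhd
  have hhd2 : h.natDegree = r + 1 := by rw [hhd]; omega
  have hcoeffh : ∀ n, n ≤ r + 1 → h.coeff n =
      ((n + (N - r - 1)).descFactorial (N - r - 1) : ℝ) *
        ∑ t ∈ s.powersetCard (r + 1 - n), ∏ l ∈ t, lam l := by
    intro n hn
    rw [hh, coeff_iterate_derivative, nsmul_eq_mul]
    congr 1
    have e : n + (N - r - 1) = N - (r + 1 - n) := by omega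
    rw [e, hfdef, coeff_prodXC s lam (by omega)]
  have hdesc1 : (0:ℝ) < ((2 + (N - r - 1)).descFactorial (N - r - 1) : ℝ) := by
    have : ¬ (2 + (N - r - 1) < N - r - 1) := by omega
    have := Nat.descFactorial_eq_zero_iff_lt.not.mpr this
    positivity
  have hh0 : h.coeff 0 ≠ 0 := by
    rw [hcoeffh 0 (by omega)]
    have e : r + 1 - 0 = r + 1 := by omega
    rw [e, ← hB]
    refine mul_ne_zero ?_ hE
    have : ¬ (0 + (N - r - 1) < N - r - 1) := by omega
    have := Nat.descFactorial_eq_zero_iff_lt.not.mpr this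
    exact_mod_cast Nat.cast_ne_zero.mpr this
  obtain ⟨hgr, hgd⟩ := rr_reverse hhr hh0
  rw [hhd2] at hgd
  set g := h.reverse with hg
  have hcg : ∀ n, n ≤ r + 1 → g.coeff n = h.coeff (r + 1 - n) := by
    intro n hn
    rw [hg, coeff_reverse, hhd2, revAt_le hn]
  set q : ℝ[X] := derivative^[r - 1] g with hq
  obtain ⟨hqr, hqd⟩ := rr_iterate hgr (r - 1)
  rw [← hq] at hqr hqd
  rw [hgd] at hqd
  have hqd2 : q.natDegree = 2 := by rw [hqd]; omega
  have hcq : ∀ n, q.coeff n = (((n + (r - 1)).descFactorial (r - 1)) : ℝ) * g.coeff (n + (r - 1)) := by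
    intro n; rw [hq, coeff_iterate_derivative, nsmul_eq_mul]
  -- the three coefficients
  have hq1 : q.coeff 1 = 0 := by
    rw [hcq 1, hcg (1 + (r - 1)) (by omega)]
    have e : r + 1 - (1 + (r - 1)) = 1 := by omega
    rw [e, hcoeffh 1 (by omega)]
    have e2 : r + 1 - 1 = r := by omega
    rw [e2, hz]
    ring
  have hq0 : q.coeff 0 = (((0 + (r - 1)).descFactorial (r - 1)) : ℝ) *
      (((2 + (N - r - 1)).descFactorial (N - r - 1) : ℝ)) * A := by
    rw [hcq 0, hcg (0 + (r - 1)) (by omega)]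
    have e : r + 1 - (0 + (r - 1)) = 2 := by omega
    rw [e, hcoeffh 2 (by omega)]
    have e2 : r + 1 - 2 = r - 1 := by omega
    rw [e2, ← hA]
    ring
  have hq2 : q.coeff 2 = (((2 + (r - 1)).descFactorial (r - 1)) : ℝ) *
      (((0 + (N - r - 1)).descFactorial (N - r - 1) : ℝ)) * B := by
    rw [hcq 2, hcg (2 + (r - 1)) (by omega)]
    have e : r + 1 - (2 + (r - 1)) = 0 := by omega
    rw [e, hcoeffh 0 (by omega)]
    have e2 : r + 1 - 0 = r + 1 := by omega
    rw [e2, ← hB]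
    ring
  -- a root exists
  have hqne : q ≠ 0 := by
    intro h0
    rw [h0] at hqd2
    simp at hqd2
  have hroots_ne : q.roots ≠ 0 := by
    intro h0
    rw [h0] at hqr
    simp [hqd2] at hqr
  obtain ⟨x, hx⟩ := Multiset.exists_mem_of_ne_zero hroots_ne
  have hxroot : q.eval x = 0 := (mem_roots hqne).mp hx
  have heval : q.eval x = q.coeff 0 + q.coeff 1 * x + q.coeff 2 * x ^ 2 := by
    rw [eval_eq_sum_range' (n := 3) (by omega) x]
    rw [Finset.sum_range_succ, Finset.sum_range_succ, Finset.sum_range_one]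
    ring
  -- positivity of the constants
  have hc0 : (0:ℝ) < (((0 + (r - 1)).descFactorial (r - 1)) : ℝ) := by
    have : ¬ (0 + (r - 1) < r - 1) := by omega
    have := Nat.descFactorial_eq_zero_iff_lt.not.mpr this
    positivity
  have hc2 : (0:ℝ) < (((2 + (r - 1)).descFactorial (r - 1)) : ℝ) := by
    have : ¬ (2 + (r - 1) < r - 1) := by omega
    have := Nat.descFactorial_eq_zero_iff_lt.not.mpr this
    positivity
  have hd0 : (0:ℝ) < (((0 + (N - r - 1)).descFactorial (N - r - 1)) : ℝ) := by
    have : ¬ (0 + (N - r - 1) < N - r - 1) := by omega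
    have := Nat.descFactorial_eq_zero_iff_lt.not.mpr this
    positivity
  rw [hxroot, hq0, hq1, hq2] at heval
  have key : ((((0 + (r - 1)).descFactorial (r - 1)) : ℝ) *
      (((2 + (N - r - 1)).descFactorial (N - r - 1) : ℝ))) * (A * B) =
      -((((2 + (r - 1)).descFactorial (r - 1)) : ℝ) *
        (((0 + (N - r - 1)).descFactorial (N - r - 1) : ℝ)) * (B * x) ^ 2) := by
    linear_combination (-B) * heval
  nlinarith [key, sq_nonneg (B * x), mul_pos hc0 hdesc1, mul_pos hc2 hd0]
end Newton

lemma esymmF_zero (m : ℕ) (lam : Fin m → ℝ) : esymmF 0 lam = 1 := by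
  simp [esymmF]

lemma esymmDrop_zero (m : ℕ) (i : Fin m) (lam : Fin m → ℝ) : esymmDrop 0 i lam = 1 := by
  simp [esymmDrop]

lemma card_erase_univ (m : ℕ) (i : Fin m) :
    ((Finset.univ : Finset (Fin m)).erase i).card = m - 1 := by
  rw [Finset.card_erase_of_mem (Finset.mem_univ i), Finset.card_fin]

lemma esymmF_eq (m j : ℕ) (hj : j ≤ m) (lam : Fin m → ℝ) :
    (∏ l : Fin m, (X + C (lam l))).coeff (m - j) = esymmF j lam := by
  have hcard : (Finset.univ : Finset (Fin m)).card = m := Finset.card_fin m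
  rw [esymmF]
  rw [show m - j = (Finset.univ : Finset (Fin m)).card - j by rw [hcard]]
  exact coeff_prodXC _ lam (by rw [hcard]; exact hj)

lemma esymmF_smul (m : ℕ) (c : ℝ) (lam : Fin m → ℝ) (j : ℕ) :
    esymmF j (fun l => c * lam l) = c ^ j * esymmF j lam := by
  rw [esymmF, esymmF, Finset.mul_sum]
  refine Finset.sum_congr rfl fun t ht => ?_
  have hc : t.card = j := (Finset.mem_powersetCard.mp ht).2
  rw [Finset.prod_mul_distrib, Finset.prod_const, hc]

lemma esymmDrop_ones (m : ℕ) (i : Fin m) (j : ℕ) :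
    esymmDrop j i (fun _ => (1 : ℝ)) = ((m - 1).choose j : ℝ) := by
  rw [esymmDrop]
  simp only [Finset.prod_const_one, Finset.sum_const, nsmul_eq_mul, mul_one]
  rw [Finset.card_powersetCard, card_erase_univ]

lemma esymmDrop_of_big (m j : ℕ) (i : Fin m) (lam : Fin m → ℝ) (h : m - 1 < j) :
    esymmDrop j i lam = 0 := by
  rw [esymmDrop, Finset.powersetCard_eq_empty.mpr (by rw [card_erase_univ]; exact h),
    Finset.sum_empty]

lemma esymmF_shift (m : ℕ) (μ : Fin m → ℝ) (t : ℝ) (j : ℕ) (hj : j ≤ m) :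
    esymmF j (fun l => μ l + t) =
      ∑ n ∈ Finset.range (j + 1),
        ((n + (m - j)).choose (m - j) : ℝ) * esymmF (j - n) μ * t ^ n := by
  have hcomp : (∏ l : Fin m, (X + C (μ l + t))) =
      (∏ l : Fin m, (X + C (μ l))).comp (X + C t) := by
    rw [Polynomial.prod_comp]
    refine Finset.prod_congr rfl fun l _ => ?_
    simp only [add_comp, X_comp, C_comp, map_add]
    ring
  have h1 : esymmF j (fun l => μ l + t) =
      (Polynomial.taylor t (∏ l : Fin m, (X + C (μ l)))).coeff (m - j) := by
    rw [taylor_apply, ← hcomp, esymmF_eq m j hj]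
  rw [h1, taylor_coeff]
  have hfd : (∏ l : Fin m, (X + C (μ l))).natDegree = m := by
    rw [(base_facts Finset.univ μ).2, Finset.card_fin]
  have hdeg : (hasseDeriv (m - j) (∏ l : Fin m, (X + C (μ l)))).natDegree < j + 1 := by
    have := natDegree_hasseDeriv_le (∏ l : Fin m, (X + C (μ l))) (m - j)
    rw [hfd] at this
    omega
  rw [eval_eq_sum_range' hdeg]
  refine Finset.sum_congr rfl fun n hn => ?_
  rw [hasseDeriv_coeff]
  have hn' : n ≤ j := Finset.mem_range_succ_iff.mp hn
  have e : n + (m - j) = m - (j - n) := by omega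
  rw [e, esymmF_eq m (j - n) (by omega) μ]

lemma seg_pos (m k : ℕ) (hk : k ≤ m) (lam : Fin m → ℝ)
    (hpos : ∀ j, 1 ≤ j → j ≤ k → 0 < esymmF j lam) :
    ∀ s : ℝ, 0 ≤ s → s ≤ 1 → ∀ j, 1 ≤ j → j ≤ k →
      0 < esymmF j (fun l => (1 - s) * lam l + s) := by
  intro s hs0 hs1 j hj1 hjk
  have hjm : j ≤ m := le_trans hjk hk
  rw [esymmF_shift m (fun l => (1 - s) * lam l) s j hjm]
  have hterm : ∀ n ∈ Finset.range (j + 1),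
      0 ≤ ((n + (m - j)).choose (m - j) : ℝ) *
        esymmF (j - n) (fun l => (1 - s) * lam l) * s ^ n := by
    intro n hn
    have hjn : j - n ≤ k := by omega
    have h2 : 0 ≤ esymmF (j - n) (fun l => (1 - s) * lam l) := by
      rw [esymmF_smul]
      rcases Nat.eq_zero_or_pos (j - n) with h | h
      · rw [h, esymmF_zero, pow_zero]; norm_num
      · exact mul_nonneg (pow_nonneg (by linarith) _) (le_of_lt (hpos _ h hjn))
    have h3 : (0:ℝ) ≤ ((n + (m - j)).choose (m - j) : ℝ) := by positivity
    exact mul_nonneg (mul_nonneg h3 h2) (pow_nonneg hs0 n)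
  rcases eq_or_lt_of_le hs0 with hs | hs
  · refine Finset.sum_pos' hterm ⟨0, Finset.mem_range.mpr (by omega), ?_⟩
    rw [← hs, esymmF_smul]
    simp only [zero_add, Nat.choose_self, Nat.cast_one, one_mul, Nat.sub_zero, pow_zero,
      mul_one, sub_zero, one_pow]
    exact hpos j hj1 hjk
  · refine Finset.sum_pos' hterm ⟨j, Finset.mem_range.mpr (by omega), ?_⟩
    rw [Nat.sub_self, esymmF_zero]
    have e : j + (m - j) = m := by omega
    rw [e]
    have hchoose : 0 < m.choose (m - j) := Nat.choose_pos (by omega)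
    have : (0:ℝ) < (m.choose (m - j) : ℝ) := by exact_mod_cast hchoose
    have hsj : (0:ℝ) < s ^ j := pow_pos hs j
    nlinarith

lemma eps_pos (m k : ℕ) (hk : k ≤ m) (lam : Fin m → ℝ)
    (hpos : ∀ j, 1 ≤ j → j ≤ k → 0 ≤ esymmF j lam) (t : ℝ) (ht : 0 < t) :
    ∀ j, 1 ≤ j → j ≤ k → 0 < esymmF j (fun l => lam l + t) := by
  intro j hj1 hjk
  have hjm : j ≤ m := le_trans hjk hk
  rw [esymmF_shift m lam t j hjm]
  have hterm : ∀ n ∈ Finset.range (j + 1),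
      0 ≤ ((n + (m - j)).choose (m - j) : ℝ) * esymmF (j - n) lam * t ^ n := by
    intro n hn
    have hjn : j - n ≤ k := by omega
    have h2 : 0 ≤ esymmF (j - n) lam := by
      rcases Nat.eq_zero_or_pos (j - n) with h | h
      · rw [h, esymmF_zero]; norm_num
      · exact hpos _ h hjn
    have h3 : (0:ℝ) ≤ ((n + (m - j)).choose (m - j) : ℝ) := by positivity
    exact mul_nonneg (mul_nonneg h3 h2) (pow_nonneg ht.le n)
  refine Finset.sum_pos' hterm ⟨j, Finset.mem_range.mpr (by omega), ?_⟩
  rw [Nat.sub_self, esymmF_zero]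
  have e : j + (m - j) = m := by omega
  rw [e]
  have hchoose : 0 < m.choose (m - j) := Nat.choose_pos (by omega)
  have h1 : (0:ℝ) < (m.choose (m - j) : ℝ) := by exact_mod_cast hchoose
  have h2 : (0:ℝ) < t ^ j := pow_pos ht j
  nlinarith

lemma esymm_rec (m : ℕ) (lam : Fin m → ℝ) (i : Fin m) (j : ℕ) (hj1 : 1 ≤ j) (hjm : j ≤ m) :
    esymmF j lam = esymmDrop j i lam + lam i * esymmDrop (j - 1) i lam := by
  set G : ℝ[X] := ∏ l ∈ (Finset.univ : Finset (Fin m)).erase i, (X + C (lam l)) with hG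
  have hF : (∏ l : Fin m, (X + C (lam l))) = (X + C (lam i)) * G :=
    (Finset.mul_prod_erase _ _ (Finset.mem_univ i)).symm
  have hGcard := card_erase_univ m i
  have hdrop : ∀ jj, jj ≤ m - 1 → G.coeff ((m - 1) - jj) = esymmDrop jj i lam := by
    intro jj hjj
    rw [esymmDrop, hG]
    rw [show (m - 1) - jj = ((Finset.univ : Finset (Fin m)).erase i).card - jj by rw [hGcard]]
    exact coeff_prodXC _ lam (by rw [hGcard]; exact hjj)
  rw [← esymmF_eq m j hjm, hF]
  rcases lt_or_eq_of_le hjm with hlt | heq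
  · -- j ≤ m - 1
    have e1 : m - j = ((m - 1) - j) + 1 := by omega
    rw [e1, add_mul, coeff_add, X_mul, coeff_mul_X, coeff_C_mul]
    have e2 : (m - 1) - j + 1 = (m - 1) - (j - 1) := by omega
    rw [hdrop j (by omega), e2, hdrop (j - 1) (by omega)]
  · -- j = m
    have e1 : m - j = 0 := by omega
    rw [e1]
    rw [mul_coeff_zero, coeff_zero_eq_eval_zero, eval_add, eval_X, eval_C, zero_add]
    rw [coeff_zero_eq_eval_zero] at *
    have e2 : G.eval 0 = G.coeff 0 := (coeff_zero_eq_eval_zero G).symm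
    rw [e2]
    have e3 : (0:ℕ) = (m - 1) - (j - 1) := by omega
    rw [e3, hdrop (j - 1) (by omega), esymmDrop_of_big m j i lam (by omega)]
    ring
lemma strict_main (m : ℕ) : ∀ k, 1 ≤ k → k ≤ m → ∀ lam : Fin m → ℝ,
    (∀ j, 1 ≤ j → j ≤ k → 0 < esymmF j lam) →
    ∀ i : Fin m, ∀ j, 1 ≤ j → j ≤ k - 1 → 0 < esymmDrop j i lam := by
  intro k
  induction k with
  | zero => omega
  | succ k ih =>
    intro _ hkm lam hpos i j hj1 hjk
    have hjk' : j ≤ k := by omega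
    rcases lt_or_eq_of_le hjk' with hlt | heq
    · -- use induction hypothesis
      exact ih (by omega) (by omega) lam
        (fun j' h1 h2 => hpos j' h1 (by omega)) i j hj1 (by omega)
    · -- j = k, main case
      subst heq
      have hj2 : 1 ≤ j := hj1
      have hcont : Continuous fun s : ℝ => esymmDrop j i (fun l => (1 - s) * lam l + s) := by
        unfold esymmDrop
        refine continuous_finset_sum _ fun t _ => continuous_finset_prod _ fun l _ => ?_
        fun_prop
      have hseg := seg_pos m (j + 1) hkm lam hpos
      have hphi1 : (fun l : Fin m => (1 - (1:ℝ)) * lam l + 1) = fun _ => (1:ℝ) := by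
        funext l; ring
      have hpos1 : 0 < esymmDrop j i (fun l => (1 - (1:ℝ)) * lam l + 1) := by
        rw [hphi1, esymmDrop_ones]
        exact_mod_cast Nat.choose_pos (by omega : j ≤ m - 1)
      by_contra hneg
      push_neg at hneg
      have hphi0 : (fun l : Fin m => (1 - (0:ℝ)) * lam l + 0) = lam := by
        funext l; ring
      have hneg0 : esymmDrop j i (fun l => (1 - (0:ℝ)) * lam l + 0) ≤ 0 := by
        rw [hphi0]; exact hneg
      obtain ⟨s₀, hs₀mem, hs₀⟩ : ∃ s₀ ∈ Set.Icc (0:ℝ) 1,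
          esymmDrop j i (fun l => (1 - s₀) * lam l + s₀) = 0 := by
        have hsub := intermediate_value_Icc (by norm_num : (0:ℝ) ≤ 1) hcont.continuousOn
        have h0mem : (0:ℝ) ∈ Set.Icc (esymmDrop j i (fun l => (1 - (0:ℝ)) * lam l + 0))
            (esymmDrop j i (fun l => (1 - (1:ℝ)) * lam l + 1)) := ⟨hneg0, hpos1.le⟩
        obtain ⟨s₀, hmem, heq⟩ := hsub h0mem
        exact ⟨s₀, hmem, heq⟩
      set μ : Fin m → ℝ := fun l => (1 - s₀) * lam l + s₀ with hμ
      have hposμ : ∀ j', 1 ≤ j' → j' ≤ j + 1 → 0 < esymmF j' μ :=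
        fun j' a b => hseg s₀ hs₀mem.1 hs₀mem.2 j' a b
      have hdropk1 : 0 < esymmDrop (j - 1) i μ := by
        rcases Nat.eq_zero_or_pos (j - 1) with h0 | h0
        · rw [h0, esymmDrop_zero]; norm_num
        · exact ih (by omega) (by omega) μ
            (fun j' a b => hposμ j' a (by omega)) i (j - 1) h0 le_rfl
      have hrec := esymm_rec m μ i (j + 1) (by omega) hkm
      have e1 : j + 1 - 1 = j := rfl
      rw [e1, hs₀] at hrec
      have hposk1 : 0 < esymmDrop (j + 1) i μ := by
        have := hposμ (j + 1) (by omega) le_rfl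
        rw [hrec] at this
        linarith
      rcases lt_or_eq_of_le hkm with hklt | hkeq
      · -- j + 1 < m : Newton
        have hnz := newton_zero ((Finset.univ : Finset (Fin m)).erase i) μ j hj1
          (by rw [card_erase_univ]; omega)
          (by rw [esymmDrop] at hs₀; exact hs₀)
        rw [show (∑ t ∈ ((Finset.univ : Finset (Fin m)).erase i).powersetCard (j - 1),
              ∏ l ∈ t, μ l) = esymmDrop (j - 1) i μ from rfl,
          show (∑ t ∈ ((Finset.univ : Finset (Fin m)).erase i).powersetCard (j + 1),
              ∏ l ∈ t, μ l) = esymmDrop (j + 1) i μ from rfl] at hnz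
        nlinarith
      · -- j + 1 = m
        have := esymmDrop_of_big m (j + 1) i μ (by omega)
        linarith

theorem esymmDrop_nonneg' (m k : ℕ) (hk1 : 1 ≤ k) (hkm : k ≤ m)
    (lam : Fin m → ℝ) (hpos : ∀ j, 1 ≤ j → j ≤ k → 0 ≤ esymmF j lam) :
    ∀ j, 1 ≤ j → j ≤ k - 1 → ∀ i : Fin m, 0 ≤ esymmDrop j i lam := by
  intro j hj1 hjk i
  have key : ∀ t : ℝ, 0 < t → 0 < esymmDrop j i (fun l => lam l + t) := fun t ht =>
    strict_main m k hk1 hkm _ (eps_pos m k hkm lam hpos t ht) i j hj1 hjk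
  have hcont : Continuous fun t : ℝ => esymmDrop j i (fun l => lam l + t) := by
    unfold esymmDrop
    refine continuous_finset_sum _ fun s _ => continuous_finset_prod _ fun l _ => ?_
    fun_prop
  have htend : Filter.Tendsto (fun t : ℝ => esymmDrop j i (fun l => lam l + t))
      (nhdsWithin 0 (Set.Ioi 0)) (nhds (esymmDrop j i fun l => lam l + 0)) :=
    (hcont.tendsto 0).mono_left nhdsWithin_le_nhds
  have hge : 0 ≤ esymmDrop j i (fun l => lam l + 0) := by
    refine ge_of_tendsto htend ?_
    filter_upwards [self_mem_nhdsWithin] with t ht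
    exact (key t ht).le
  simpa using hge

end AuxNewton

/-- estimate (3.5). If `S_j(λ) ≥ 0` for `j = 1, …, k`, then
`S_{j,i}(λ) ≥ 0` for all `j = 1, …, k-1` and all `i`. -/
theorem esymmDrop_nonneg (m k : ℕ) (hk1 : 1 ≤ k) (hkm : k ≤ m)
    (lam : Fin m → ℝ) (hpos : ∀ j, 1 ≤ j → j ≤ k → 0 ≤ esymmF j lam) :
    ∀ j, 1 ≤ j → j ≤ k - 1 → ∀ i : Fin m, 0 ≤ esymmDrop j i lam := by
  exact esymmDrop_nonneg' m k hk1 hkm lam hpos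
end

section
/- Let X_1,…,X_m be smooth vector fields on an open set Ω ⊂ ℝⁿ satisfying [X_i,[X_i,X_j]] = 0 for all i,j = 1,…,m. Then for every u ∈ C³(Ω) and every j = 1,…,m, Σ_{i=1}^m X_i ( 𝓕_2^{ij}(X²u) ) = 0; explicitly, Σ_{i=1}^m X_i ( (Δ_X u) δ_{ij} + X_iX_ju − 2 X_jX_iu ) = 0, i.e. the columns of the matrix [𝓕_2^{ij}(X²u)] are divergence free with respect to X. -/
open MeasureTheory Filter Topology

/-! The theorem is the pointwise operator identity
`X_i X_i X_j - 2 X_i X_j X_i + X_j X_i X_i = [X_i, [X_i, X_j]]`, summed over `i`: the `δ_{ij}`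
term contributes `X_j Δ_X u = ∑_i X_j X_i X_i u`. The operator identity follows by applying
`X_c X_d - X_d X_c = X_{[c,d]}` (symmetry of second derivatives) twice. -/

section VectorFieldCalculus

variable {n : ℕ} {c d : (Fin n → ℝ) → (Fin n → ℝ)} {f g u : (Fin n → ℝ) → ℝ}
  {x : Fin n → ℝ}

lemma Xop_congr (h : f =ᶠ[𝓝 x] g) : Xop c f x = Xop c g x := by
  rw [Xop, Xop, h.fderiv_eq]

lemma Xop_of_apply_eq_zero (hc : c x = 0) : Xop c u x = 0 := by
  rw [Xop, hc, map_zero]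

lemma Xop_add (hf : DifferentiableAt ℝ f x) (hg : DifferentiableAt ℝ g x) :
    Xop c (fun y => f y + g y) x = Xop c f x + Xop c g x := by
  simp only [Xop, fderiv_fun_add hf hg, add_apply]

lemma Xop_sub (hf : DifferentiableAt ℝ f x) (hg : DifferentiableAt ℝ g x) :
    Xop c (fun y => f y - g y) x = Xop c f x - Xop c g x := by
  simp only [Xop, fderiv_fun_sub hf hg, sub_apply]

lemma Xop_const_mul (a : ℝ) (hf : DifferentiableAt ℝ f x) :
    Xop c (fun y => a * f y) x = a * Xop c f x := by
  simp only [Xop, fderiv_const_mul hf, smul_apply, smul_eq_mul]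

lemma Xop_sum {ι : Type*} (s : Finset ι) {F : ι → (Fin n → ℝ) → ℝ}
    (hF : ∀ k ∈ s, DifferentiableAt ℝ (F k) x) :
    Xop c (fun y => ∑ k ∈ s, F k y) x = ∑ k ∈ s, Xop c (F k) x := by
  simp only [Xop, fderiv_fun_sum hF, sum_apply]

lemma Xop_subLap {m : ℕ} {b : Fin m → (Fin n → ℝ) → (Fin n → ℝ)}
    (hb : ∀ k, DifferentiableAt ℝ (Xop (b k) (Xop (b k) u)) x) :
    Xop c (subLap b u) x = ∑ k, Xop c (Xop (b k) (Xop (b k) u)) x :=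
  Xop_sum _ fun k _ => hb k

lemma ContDiffAt.Xop {k l : WithTop ℕ∞} (hc : ContDiffAt ℝ k c x) (hu : ContDiffAt ℝ l u x)
    (hkl : k + 1 ≤ l) : ContDiffAt ℝ k (Xop c u) x :=
  (hu.fderiv_right hkl).clm_apply hc

lemma vfBracket_eq_fderiv_sub (hc : DifferentiableAt ℝ c x) (hd : DifferentiableAt ℝ d x) :
    vfBracket c d x = fderiv ℝ d x (c x) - fderiv ℝ c x (d x) := by
  funext l
  simp [vfBracket, fderiv_apply hc, fderiv_apply hd]

lemma ContDiffAt.vfBracket {k : ℕ} (hc : ContDiffAt ℝ (k + 1) c x)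
    (hd : ContDiffAt ℝ (k + 1) d x) : ContDiffAt ℝ k (vfBracket c d) x := by
  have hsmooth : ContDiffAt ℝ k (fun y => fderiv ℝ d y (c y) - fderiv ℝ c y (d y)) x :=
    ((hd.fderiv_right le_rfl).clm_apply (hc.of_le le_self_add)).sub
      ((hc.fderiv_right le_rfl).clm_apply (hd.of_le le_self_add))
  refine hsmooth.congr_of_eventuallyEq ?_
  filter_upwards [hc.eventually (by simp), hd.eventually (by simp)] with y hcy hdy
  exact vfBracket_eq_fderiv_sub (hcy.differentiableAt (by simp))
    (hdy.differentiableAt (by simp))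

lemma Xop_commutator (hc : DifferentiableAt ℝ c x) (hd : DifferentiableAt ℝ d x)
    (hu : ContDiffAt ℝ 2 u x) :
    Xop c (Xop d u) x - Xop d (Xop c u) x = Xop (vfBracket c d) u x := by
  have hDu : DifferentiableAt ℝ (fderiv ℝ u) x :=
    (hu.fderiv_right (m := 1) (by norm_num)).differentiableAt one_ne_zero
  have hD2u_symm : ∀ v w, fderiv ℝ (fderiv ℝ u) x v w = fderiv ℝ (fderiv ℝ u) x w v := by
    refine second_derivative_symmetric_of_eventually (f := u) ?_ hDu.hasFDerivAt
    filter_upwards [hu.eventually (by simp)] with y hy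
    exact (hy.differentiableAt two_ne_zero).hasFDerivAt
  have hexpand : ∀ {e e' : (Fin n → ℝ) → (Fin n → ℝ)}, DifferentiableAt ℝ e' x →
      Xop e (Xop e' u) x
        = fderiv ℝ (fderiv ℝ u) x (e x) (e' x) + fderiv ℝ u x (fderiv ℝ e' x (e x)) := by
    intro e e' he'
    rw [Xop, show Xop e' u = fun y => fderiv ℝ u y (e' y) from rfl]
    simp only [fderiv_clm_apply hDu he', add_apply,
      ContinuousLinearMap.comp_apply, ContinuousLinearMap.flip_apply]
    ring
  rw [hexpand hd, hexpand hc, hD2u_symm (c x), Xop, vfBracket_eq_fderiv_sub hc hd, map_sub]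
  ring

lemma Xop_double_commutator (hc : ContDiffAt ℝ 2 c x) (hd : ContDiffAt ℝ 2 d x)
    (hu : ContDiffAt ℝ 3 u x) :
    Xop c (Xop c (Xop d u)) x - 2 * Xop c (Xop d (Xop c u)) x + Xop d (Xop c (Xop c u)) x
      = Xop (vfBracket c (vfBracket c d)) u x := by
  have hc1 : DifferentiableAt ℝ c x := hc.differentiableAt two_ne_zero
  have hd1 : DifferentiableAt ℝ d x := hd.differentiableAt two_ne_zero
  have hcd : DifferentiableAt ℝ (vfBracket c d) x :=
    (ContDiffAt.vfBracket (k := 1) hc hd).differentiableAt one_ne_zero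
  have hcu : ContDiffAt ℝ 2 (Xop c u) x := hc.Xop hu le_rfl
  have hdu : ContDiffAt ℝ 2 (Xop d u) x := hd.Xop hu le_rfl
  have hcomm_near : (fun y => Xop c (Xop d u) y - Xop d (Xop c u) y)
      =ᶠ[𝓝 x] Xop (vfBracket c d) u := by
    filter_upwards [hc.eventually (by simp), hd.eventually (by simp), hu.eventually (by simp)]
      with y hcy hdy huy
    exact Xop_commutator (hcy.differentiableAt two_ne_zero) (hdy.differentiableAt two_ne_zero)
      (huy.of_le (by norm_num))
  have hXc_comm : Xop c (Xop c (Xop d u)) x - Xop c (Xop d (Xop c u)) x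
      = Xop c (Xop (vfBracket c d) u) x := by
    rw [← Xop_sub ((hc.of_le one_le_two).Xop hdu le_rfl |>.differentiableAt one_ne_zero)
      ((hd.of_le one_le_two).Xop hcu le_rfl |>.differentiableAt one_ne_zero)]
    exact Xop_congr hcomm_near
  have h₁ := Xop_commutator hc1 hd1 hcu
  have h₂ := Xop_commutator hc1 hcd (hu.of_le (by norm_num))
  linear_combination hXc_comm - h₁ + h₂

end VectorFieldCalculus

/-- identity (2.5). If all second commutators `[X_i,[X_i,X_j]]`
vanish, the columns of `[𝓕₂^{ij}(X²u)]` are divergence free with respect to `X`: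
`∑_i X_i((Δ_X u)δ_{ij} + X_iX_ju - 2X_jX_iu) = 0`. -/
theorem divergence_identity (n m : ℕ) (Ω : Set (Fin n → ℝ)) (hΩo : IsOpen Ω)
    (b : Fin m → (Fin n → ℝ) → (Fin n → ℝ))
    (hb : ∀ i, ContDiffOn ℝ (⊤ : ℕ∞) (b i) Ω)
    (hcomm : ∀ i j : Fin m, ∀ x ∈ Ω,
      vfBracket (b i) (fun y => vfBracket (b i) (b j) y) x = 0)
    (u : (Fin n → ℝ) → ℝ) (hu : ContDiffOn ℝ 3 u Ω) (j : Fin m) :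
    ∀ x ∈ Ω,
      ∑ i : Fin m, Xop (b i)
        (fun y => (if i = j then subLap b u y else 0) +
          Xop (b i) (Xop (b j) u) y - 2 * Xop (b j) (Xop (b i) u) y) x = 0 := by
  intro x hx
  have hbx : ∀ i, ContDiffAt ℝ 2 (b i) x := fun i =>
    ((hb i).contDiffAt (hΩo.mem_nhds hx)).of_le (WithTop.coe_le_coe.mpr le_top)
  have hux : ContDiffAt ℝ 3 u x := hu.contDiffAt (hΩo.mem_nhds hx)
  have hXX : ∀ p q, DifferentiableAt ℝ (Xop (b p) (Xop (b q) u)) x := fun p q =>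
    (((hbx p).of_le one_le_two).Xop ((hbx q).Xop hux le_rfl) le_rfl).differentiableAt
      one_ne_zero
  have hterm : ∀ i, Xop (b i)
      (fun y => (if i = j then subLap b u y else 0) +
        Xop (b i) (Xop (b j) u) y - 2 * Xop (b j) (Xop (b i) u) y) x
      = (if i = j then ∑ k, Xop (b j) (Xop (b k) (Xop (b k) u)) x else 0) +
        Xop (b i) (Xop (b i) (Xop (b j) u)) x - 2 * Xop (b i) (Xop (b j) (Xop (b i) u)) x := by
    intro i
    by_cases hij : i = j
    · subst hij
      have hΔ : DifferentiableAt ℝ (subLap b u) x :=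
        DifferentiableAt.fun_sum fun k _ => hXX k k
      simp only [if_true]
      rw [Xop_sub (f := fun y => subLap b u y + _) (hΔ.add (hXX i i)) ((hXX i i).const_mul 2),
        Xop_add hΔ (hXX i i), Xop_const_mul 2 (hXX i i), Xop_subLap fun k => hXX k k]
    · simp only [hij, if_false, zero_add]
      rw [Xop_sub (hXX i j) ((hXX j i).const_mul 2), Xop_const_mul 2 (hXX j i)]
  calc _ = ∑ i, (Xop (b i) (Xop (b i) (Xop (b j) u)) x
          - 2 * Xop (b i) (Xop (b j) (Xop (b i) u)) x + Xop (b j) (Xop (b i) (Xop (b i) u)) x) := by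
        simp only [hterm, Finset.sum_sub_distrib, Finset.sum_add_distrib, Finset.sum_ite_eq',
          Finset.mem_univ, if_true]
        ring
    _ = ∑ i, Xop (vfBracket (b i) (vfBracket (b i) (b j))) u x :=
        Finset.sum_congr rfl fun i _ => Xop_double_commutator (hbx i) (hbx j) hux
    _ = 0 := Finset.sum_eq_zero fun i _ => Xop_of_apply_eq_zero (hcomm i j x hx)
end

section
/- Let A be a real symmetric m×m matrix whose eigenvalues λ = (λ_1,…,λ_m) satisfy S_1(λ) ≥ 0 and S_2(λ) ≥ 0. Then the matrix (trace A)·I_m − A is positive semidefinite. -/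
open MeasureTheory Filter Topology

/-!
Since `2 S₂(λ) = S₁(λ)² - ∑ λᵢ²`, the hypotheses give `λᵢ² ≤ ∑ λⱼ² ≤ S₁(λ)²` with `S₁(λ) ≥ 0`, so
every eigenvalue is at most `S₁(λ) = trace A`. Hence all eigenvalues `trace A - λᵢ` of
`(trace A)·I - A` are nonnegative.
-/

open MvPolynomial Finset Matrix Unitary
open scoped ComplexOrder

lemma esymmF_eq_eval_esymm {m : ℕ} (k : ℕ) (lam : Fin m → ℝ) :
    esymmF k lam = eval lam (esymm (Fin m) ℝ k) := by
  simp [esymmF, esymm]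

lemma esymmF_one {m : ℕ} (lam : Fin m → ℝ) : esymmF 1 lam = ∑ i, lam i := by
  simp [esymmF_eq_eval_esymm, esymm_one]

lemma two_mul_esymmF_two {m : ℕ} (lam : Fin m → ℝ) :
    2 * esymmF 2 lam = esymmF 1 lam ^ 2 - ∑ i, lam i ^ 2 := by
  have hpairs : ({a ∈ antidiagonal 2 | a.1 < 2} : Finset (ℕ × ℕ)) = {(0, 2), (1, 1)} := by
    decide
  have newton := congrArg (eval lam) (mul_esymm_eq_sum (Fin m) ℝ 2)
  rw [hpairs, sum_pair (by decide)] at newton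
  simp only [Nat.cast_ofNat, map_mul, eval_ofNat, Nat.reduceAdd, pow_zero, esymm_zero, mul_one, psum,
    one_mul, pow_one, esymm_one, neg_mul, map_pow, map_neg, map_one, map_add, map_sum, eval_X] at newton
  rw [esymmF_eq_eval_esymm, esymmF_one]
  linear_combination newton

lemma le_esymmF_one_of_esymmF_nonneg {m : ℕ} {lam : Fin m → ℝ} (h1 : 0 ≤ esymmF 1 lam)
    (h2 : 0 ≤ esymmF 2 lam) (i : Fin m) : lam i ≤ esymmF 1 lam := by
  refine le_of_sq_le_sq ?_ h1
  calc lam i ^ 2 ≤ ∑ j, lam j ^ 2 := single_le_sum (fun j _ ↦ sq_nonneg (lam j)) (mem_univ i)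
    _ ≤ esymmF 1 lam ^ 2 := by linarith [two_mul_esymmF_two lam]

theorem Matrix.IsHermitian.posSemidef_smul_one_sub {n 𝕜 : Type*} [Fintype n] [DecidableEq n]
    [RCLike 𝕜] {A : Matrix n n 𝕜} (hA : A.IsHermitian) {c : ℝ}
    (hc : ∀ i, hA.eigenvalues i ≤ c) : (c • (1 : Matrix n n 𝕜) - A).PosSemidef := by
  have hconj : c • (1 : Matrix n n 𝕜) - A = conjStarAlgAut 𝕜 _ hA.eigenvectorUnitary
      (diagonal fun i ↦ ((c - hA.eigenvalues i : ℝ) : 𝕜)) := by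
    conv_lhs => rw [hA.spectral_theorem]
    rw [RCLike.real_smul_eq_coe_smul (K := 𝕜),
      ← map_one (conjStarAlgAut 𝕜 _ hA.eigenvectorUnitary), ← map_smul, ← map_sub,
      smul_one_eq_diagonal, diagonal_sub]
    simp
  rw [hconj, conjStarAlgAut_apply, isUnit_coe.posSemidef_star_right_conjugate_iff,
    posSemidef_diagonal_iff]
  exact fun i ↦ mod_cast sub_nonneg.mpr (hc i)

/-- degenerate ellipticity (5.5). If the eigenvalues of a real
symmetric matrix `A` satisfy `S₁(λ) ≥ 0` and `S₂(λ) ≥ 0`, then `(trace A)·I - A` is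
positive semidefinite. -/
theorem trace_id_sub_posSemidef (m : ℕ) (A : Matrix (Fin m) (Fin m) ℝ)
    (hA : A.IsHermitian)
    (h1 : 0 ≤ esymmF 1 hA.eigenvalues) (h2 : 0 ≤ esymmF 2 hA.eigenvalues) :
    (A.trace • (1 : Matrix (Fin m) (Fin m) ℝ) - A).PosSemidef := by
  have htrace : A.trace = esymmF 1 hA.eigenvalues := by
    simp [hA.trace_eq_sum_eigenvalues, esymmF_one]
  rw [htrace]
  exact hA.posSemidef_smul_one_sub (le_esymmF_one_of_esymmF_nonneg h1 h2)
end

section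
/- For every real m×m matrix r, (1/2)[ (Σ_i r_{ii})² − Σ_{i,j} r_{ij} r_{ji} + (1/2) Σ_{i,j} (r_{ij} − r_{ji})² ] = S_2( λ( ½(r + rᵀ) ) ) + (3/4) Σ_{i<j} (r_{ij} − r_{ji})², where λ(½(r + rᵀ)) denotes the eigenvalues of the symmetric part of r. In other words, 𝓕_2(r) = F_2 of the symmetrization of r plus (3/4) times the squared antisymmetric part summed over i < j. -/
/-! For a real symmetric matrix `A` with eigenvalues `λ`, Newton's identity gives
`2 S₂(λ) = (Σ λᵢ)² - Σ λᵢ² = (tr A)² - tr (A²)`. For `A = ½(r + rᵀ)` one has `tr A = tr r` and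
`tr (A²) = Σ rᵢⱼ rⱼᵢ + ¼ Σ (rᵢⱼ - rⱼᵢ)²`, and the full double sum of the squares `(rᵢⱼ - rⱼᵢ)²`
is twice their sum over `i < j`. -/

open MeasureTheory Filter Topology

/-- The symmetric part `½(r + rᵀ)` of a real square matrix. -/
noncomputable def symPart {m : ℕ} (r : Matrix (Fin m) (Fin m) ℝ) :
    Matrix (Fin m) (Fin m) ℝ :=
  (1 / 2 : ℝ) • (r + r.transpose)

theorem symPart_isHermitian {m : ℕ} (r : Matrix (Fin m) (Fin m) ℝ) :
    (symPart r).IsHermitian := by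
  unfold Matrix.IsHermitian symPart
  ext i j
  simp only [Matrix.conjTranspose_apply, Matrix.smul_apply, Matrix.add_apply,
    Matrix.transpose_apply, star_trivial, smul_eq_mul]
  ring

open Finset

theorem Finset.two_mul_sum_powersetCard_two_prod {ι R : Type*} [Fintype ι] [CommRing R]
    (f : ι → R) :
    2 * ∑ t ∈ powersetCard 2 univ, ∏ i ∈ t, f i = (∑ i, f i) ^ 2 - ∑ i, f i ^ 2 := by
  have newton := congrArg (MvPolynomial.aeval f) (MvPolynomial.mul_esymm_eq_sum ι R 2)
  simp only [MvPolynomial.psum, MvPolynomial.esymm, map_mul, map_sum, map_prod, map_pow,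
    MvPolynomial.aeval_X, map_neg, map_one, map_natCast] at newton
  rw [show ({a ∈ antidiagonal 2 | a.1 < 2} : Finset (ℕ × ℕ)) = {(0, 2), (1, 1)} by decide] at newton
  simp only [Nat.cast_ofNat, Nat.reduceAdd, mem_singleton, Prod.mk.injEq, zero_ne_one,
    OfNat.ofNat_ne_one, and_self, not_false_eq_true, sum_insert, pow_zero, powersetCard_zero,
    sum_singleton, prod_empty, mul_one, one_mul, pow_one, powersetCard_one, sum_map,
    Function.Embedding.coeFn_mk, prod_singleton, neg_mul] at newton
  linear_combination newton

theorem Finset.sum_sum_eq_sum_diag_add_sum_sum_Ioi {α M : Type*} [Fintype α] [LinearOrder α]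
    [LocallyFiniteOrderTop α] [LocallyFiniteOrderBot α] [AddCommMonoid M] (g : α → α → M) :
    ∑ i, ∑ j, g i j = ∑ i, g i i + ∑ i, ∑ j ∈ Ioi i, (g i j + g j i) := by
  rw [sum_sum_Ioi_add_eq_sum_sum_off_diag (fun j i => g i j), ← sum_add_distrib]
  exact sum_congr rfl fun i _ => Fintype.sum_eq_add_sum_compl i (g i)

theorem Matrix.IsHermitian.trace_mul_self_eq_sum_eigenvalues_sq {𝕜 n : Type*} [RCLike 𝕜]
    [Fintype n] [DecidableEq n] {A : Matrix n n 𝕜} (hA : A.IsHermitian) :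
    (A * A).trace = ∑ i, (hA.eigenvalues i : 𝕜) ^ 2 := by
  conv_lhs => rw [hA.spectral_theorem, ← map_mul, Unitary.conjStarAlgAut_apply,
    Matrix.trace_mul_cycle, Unitary.coe_star_mul_self, one_mul, Matrix.diagonal_mul_diagonal,
    Matrix.trace_diagonal]
  simp only [Function.comp_apply, sq]

theorem Matrix.IsHermitian.two_mul_esymmF_two_eigenvalues {m : ℕ}
    {A : Matrix (Fin m) (Fin m) ℝ} (hA : A.IsHermitian) :
    2 * esymmF 2 hA.eigenvalues = A.trace ^ 2 - (A * A).trace := by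
  rw [esymmF, two_mul_sum_powersetCard_two_prod, hA.trace_eq_sum_eigenvalues,
    hA.trace_mul_self_eq_sum_eigenvalues_sq]
  simp

theorem symPart_apply {m : ℕ} (r : Matrix (Fin m) (Fin m) ℝ) (i j : Fin m) :
    symPart r i j = (r i j + r j i) / 2 := by
  simp only [symPart, Matrix.smul_apply, Matrix.add_apply, Matrix.transpose_apply, smul_eq_mul]
  ring

theorem trace_symPart {m : ℕ} (r : Matrix (Fin m) (Fin m) ℝ) :
    (symPart r).trace = ∑ i, r i i := by
  simp [Matrix.trace, symPart_apply]

theorem trace_symPart_mul_self {m : ℕ} (r : Matrix (Fin m) (Fin m) ℝ) :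
    (symPart r * symPart r).trace =
      ∑ i, ∑ j, r i j * r j i + (1 / 4) * ∑ i, ∑ j, (r i j - r j i) ^ 2 := by
  simp only [Matrix.trace, Matrix.diag, Matrix.mul_apply, symPart_apply, mul_sum,
    ← sum_add_distrib]
  exact sum_congr rfl fun i _ => sum_congr rfl fun j _ => by ring

/-- identity (2.4). For every real `m × m` matrix `r`,
`𝓕₂(r) = S₂(λ(½(r + rᵀ))) + (3/4) ∑_{i<j} (r_{ij} - r_{ji})²`. -/
theorem calF2_matrix_identity (m : ℕ) (r : Matrix (Fin m) (Fin m) ℝ) :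
    (1 / 2 : ℝ) * ((∑ i, r i i) ^ 2 - (∑ i : Fin m, ∑ j : Fin m, r i j * r j i) +
        (1 / 2) * ∑ i : Fin m, ∑ j : Fin m, (r i j - r j i) ^ 2) =
      esymmF 2 (symPart_isHermitian r).eigenvalues +
        (3 / 4) * ∑ i : Fin m, ∑ j ∈ Finset.Ioi i, (r i j - r j i) ^ 2 := by
  have hS₂ := (symPart_isHermitian r).two_mul_esymmF_two_eigenvalues
  rw [trace_symPart, trace_symPart_mul_self] at hS₂
  have hsplit : ∑ i, ∑ j, (r i j - r j i) ^ 2 = 2 * ∑ i, ∑ j ∈ Ioi i, (r i j - r j i) ^ 2 := by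
    rw [sum_sum_eq_sum_diag_add_sum_sum_Ioi, mul_sum]
    simp only [sub_self, zero_pow two_ne_zero, sum_const_zero, zero_add, mul_sum]
    exact sum_congr rfl fun i _ => sum_congr rfl fun j _ => by ring
  linear_combination (-1 / 2 : ℝ) * hS₂ + (3 / 8 : ℝ) * hsplit
end
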